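/- Let μ = μ₁ ⊗ ν be a product probability measure on ℝ × ℝ^k with x = (x₁, x⊥), let c > 0, assume μ₁({0}) = 0 and ∫ ‖x⊥‖² dν < ∞, and let labels be generated by the calibrated logistic model with w* = c·e₁. Define Err = ∫ min(σ(c·t), 1−σ(c·t)) dμ₁(t), A = ∫ σ(c·x₁)·(1−σ(c·x₁))·x⊥·x⊥ᵀ dμ, and C = ∫ x⊥·x⊥ᵀ dν. If Err > 0 and A and C are positive definite, then 2·Err·A^{−1} ⪯ ((1/4)·C)^{−1} ⪯ 4·Err·A^{−1} in the Loewner order; i.e., the asymptotic variance of uncertainty sampling in the directions orthogonal to w* is between 2·Err and 4·Err times that of random sampling. -/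

import Mathlib

open MeasureTheory

/-- The logistic sigmoid `σ(a) = 1 / (1 + exp (−a))`. -/
noncomputable def sigmoid (a : ℝ) : ℝ := 1 / (1 + Real.exp (-a))

/-!
Since `μ = μ₁ ⊗ ν` is a product measure, `A` factorises as `κ • C` with
`κ = ∫ σ(c t)(1 − σ(c t)) dμ₁`, so both sides of the sandwich are scalar multiples of `C⁻¹`.
For `p ∈ [0, 1]` we have `p (1 − p) ≤ min p (1 − p) ≤ 2 p (1 − p)`, which integrates to
`κ ≤ Err ≤ 2κ`; this is exactly the comparison of the scalars `4` and `Err / κ`.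
-/

theorem sigmoid_eq_real_sigmoid : sigmoid = Real.sigmoid :=
  funext fun x => one_div (1 + Real.exp (-x))

section UnitInterval

variable {p : ℝ}

lemma mul_one_sub_le_min (h0 : 0 ≤ p) (h1 : p ≤ 1) : p * (1 - p) ≤ min p (1 - p) :=
  le_min (by nlinarith) (by nlinarith)

lemma min_le_two_mul_mul_one_sub (h0 : 0 ≤ p) (h1 : p ≤ 1) :
    min p (1 - p) ≤ 2 * (p * (1 - p)) := by
  rcases le_total p (1 / 2) with hp | hp
  · exact (min_le_left _ _).trans (by nlinarith)
  · exact (min_le_right _ _).trans (by nlinarith)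

end UnitInterval

section UnitIntervalValued

variable {α : Type*} [MeasurableSpace α] {μ : Measure α} [IsFiniteMeasure μ] {p : α → ℝ}

lemma integrable_of_nonneg_of_le_one (hp : AEStronglyMeasurable p μ) (h0 : ∀ x, 0 ≤ p x)
    (h1 : ∀ x, p x ≤ 1) : Integrable p μ :=
  .of_bound hp 1 <| ae_of_all _ fun x =>
    (Real.norm_eq_abs _).trans_le (abs_le.2 ⟨by linarith [h0 x], h1 x⟩)

variable (hp : AEStronglyMeasurable p μ) (h0 : ∀ x, 0 ≤ p x) (h1 : ∀ x, p x ≤ 1)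
include hp h0 h1

lemma integrable_mul_one_sub : Integrable (fun x => p x * (1 - p x)) μ :=
  integrable_of_nonneg_of_le_one (hp.mul (aestronglyMeasurable_const.sub hp))
    (fun x => mul_nonneg (h0 x) (sub_nonneg.2 (h1 x))) (fun x => by nlinarith [h0 x, h1 x])

lemma integrable_min_one_sub : Integrable (fun x => min (p x) (1 - p x)) μ :=
  integrable_of_nonneg_of_le_one (hp.inf (aestronglyMeasurable_const.sub hp))
    (fun x => le_min (h0 x) (sub_nonneg.2 (h1 x))) (fun x => by
      linarith [min_le_right (p x) (1 - p x), h0 x])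

lemma integral_mul_one_sub_le_integral_min :
    ∫ x, p x * (1 - p x) ∂μ ≤ ∫ x, min (p x) (1 - p x) ∂μ :=
  integral_mono (integrable_mul_one_sub hp h0 h1) (integrable_min_one_sub hp h0 h1)
    fun x => mul_one_sub_le_min (h0 x) (h1 x)

lemma integral_min_le_two_mul_integral_mul_one_sub :
    ∫ x, min (p x) (1 - p x) ∂μ ≤ 2 * ∫ x, p x * (1 - p x) ∂μ := by
  rw [← integral_const_mul]
  exact integral_mono (integrable_min_one_sub hp h0 h1)
    ((integrable_mul_one_sub hp h0 h1).const_mul 2)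
    fun x => min_le_two_mul_mul_one_sub (h0 x) (h1 x)

end UnitIntervalValued

namespace Matrix

lemma of_integral_prod_mul {α β ι : Type*} [MeasurableSpace α] [MeasurableSpace β]
    (μ : Measure α) (ν : Measure β) [SFinite μ] [SFinite ν] (f : α → ℝ) (g : ι → ι → β → ℝ) :
    (of fun i j => ∫ x, f x.1 * g i j x.2 ∂(μ.prod ν)) =
      (∫ a, f a ∂μ) • of fun i j => ∫ b, g i j b ∂ν := by
  ext i j
  exact integral_prod_mul _ _

lemma inv_smul_of_ne_zero {n K : Type*} [Fintype n] [DecidableEq n] [Field K] {a : K}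
    (ha : a ≠ 0) {C : Matrix n n K} (hC : IsUnit C.det) : (a • C)⁻¹ = a⁻¹ • C⁻¹ :=
  inv_smul' C (Units.mk0 a ha) hC

lemma PosSemidef.smul_sub_smul {n : Type*} {M : Matrix n n ℝ} (hM : M.PosSemidef) {x y : ℝ}
    (h : y ≤ x) :
    (x • M - y • M).PosSemidef := by
  rw [← sub_smul]
  exact hM.smul (sub_nonneg.2 h)

end Matrix

theorem asymptotic_variance_sandwich_general {k : ℕ} (μ₁ : Measure ℝ)
    (ν : Measure (EuclideanSpace ℝ (Fin k))) [IsProbabilityMeasure μ₁]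
    [IsProbabilityMeasure ν] (c : ℝ)
    (Err : ℝ) (hErr_def : Err = ∫ t, min (sigmoid (c * t)) (1 - sigmoid (c * t)) ∂μ₁)
    (hErr_pos : 0 < Err)
    (A C : Matrix (Fin k) (Fin k) ℝ)
    (hA : A = Matrix.of fun i j : Fin k =>
        ∫ x : ℝ × EuclideanSpace ℝ (Fin k),
          sigmoid (c * x.1) * (1 - sigmoid (c * x.1)) * (x.2 i * x.2 j) ∂(μ₁.prod ν))
    (hC : C = Matrix.of fun i j : Fin k => ∫ v, v i * v j ∂ν)
    (hC_pd : C.PosDef) :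
    (((1 / 4 : ℝ) • C)⁻¹ - (2 * Err) • A⁻¹).PosSemidef ∧
      ((4 * Err) • A⁻¹ - ((1 / 4 : ℝ) • C)⁻¹).PosSemidef := by
  rw [sigmoid_eq_real_sigmoid] at hErr_def hA
  set p : ℝ → ℝ := fun t => Real.sigmoid (c * t)
  set κ := ∫ t, p t * (1 - p t) ∂μ₁
  have hAC : A = κ • C := by
    rw [hA, hC]
    exact Matrix.of_integral_prod_mul μ₁ ν (fun t => p t * (1 - p t)) fun i j v => v i * v j
  have hp : Continuous p := continuous_sigmoid.comp (continuous_const_mul c)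
  have h0 (t : ℝ) : 0 ≤ p t := Real.sigmoid_nonneg _
  have h1 (t : ℝ) : p t ≤ 1 := Real.sigmoid_le_one _
  have hκ_le : κ ≤ Err :=
    hErr_def ▸ integral_mul_one_sub_le_integral_min hp.aestronglyMeasurable h0 h1
  have hErr_le : Err ≤ 2 * κ :=
    hErr_def ▸ integral_min_le_two_mul_integral_mul_one_sub hp.aestronglyMeasurable h0 h1
  have hκ : 0 < κ := by linarith
  have hC_unit : IsUnit C.det := (Matrix.isUnit_iff_isUnit_det C).mp hC_pd.isUnit
  rw [hAC, Matrix.inv_smul_of_ne_zero hκ.ne' hC_unit,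
    Matrix.inv_smul_of_ne_zero (by norm_num) hC_unit, smul_smul, smul_smul]
  refine ⟨hC_pd.inv.posSemidef.smul_sub_smul ?_, hC_pd.inv.posSemidef.smul_sub_smul ?_⟩
  · rw [mul_inv_le_iff₀ hκ]; norm_num; linarith
  · rw [le_mul_inv_iff₀ hκ]; norm_num; linarith

/-- Let `μ = μ₁ ⊗ ν` be a product probability measure on `ℝ × ℝᵏ`, `c > 0`,
`μ₁({0}) = 0`, `∫ ‖x⊥‖² dν < ∞`, with labels generated by the calibrated logistic
model with `w* = c e₁`. With `Err = ∫ min (σ(c t)) (1 − σ(c t)) dμ₁`,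
`A = ∫ σ(c x₁)(1 − σ(c x₁)) x⊥ x⊥ᵀ dμ` and `C = ∫ x⊥ x⊥ᵀ dν`, if `Err > 0` and both
`A` and `C` are positive definite, then
`2 Err A⁻¹ ⪯ ((1/4) C)⁻¹ ⪯ 4 Err A⁻¹` in the Loewner order: the asymptotic variance
of uncertainty sampling in the directions orthogonal to `w*` is between `2 Err` and
`4 Err` times that of random sampling. -/
theorem asymptotic_variance_sandwich {k : ℕ} (μ₁ : Measure ℝ)
    (ν : Measure (EuclideanSpace ℝ (Fin k))) [IsProbabilityMeasure μ₁]
    [IsProbabilityMeasure ν] (c : ℝ) (hc : 0 < c)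
    (h0 : μ₁ {0} = 0)
    (hint : Integrable (fun v : EuclideanSpace ℝ (Fin k) => ‖v‖ ^ 2) ν)
    (Err : ℝ) (hErr_def : Err = ∫ t, min (sigmoid (c * t)) (1 - sigmoid (c * t)) ∂μ₁)
    (hErr_pos : 0 < Err)
    (A C : Matrix (Fin k) (Fin k) ℝ)
    (hA : A = Matrix.of fun i j : Fin k =>
        ∫ x : ℝ × EuclideanSpace ℝ (Fin k),
          sigmoid (c * x.1) * (1 - sigmoid (c * x.1)) * (x.2 i * x.2 j) ∂(μ₁.prod ν))
    (hC : C = Matrix.of fun i j : Fin k => ∫ v, v i * v j ∂ν)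
    (hA_pd : A.PosDef) (hC_pd : C.PosDef) :
    (((1 / 4 : ℝ) • C)⁻¹ - (2 * Err) • A⁻¹).PosSemidef ∧
      ((4 * Err) • A⁻¹ - ((1 / 4 : ℝ) • C)⁻¹).PosSemidef :=
  asymptotic_variance_sandwich_general μ₁ ν c Err hErr_def hErr_pos A C hA hC hC_pd
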